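/- arXiv:2207.10930 — 5 statements merged into one kernel-verified Lean document; each statement's English description precedes it below -/
import Mathlib

section
/- Let K be a totally real number field and let H be a finite set of prime ideals of O_K, none dividing 2, containing a representative of every ideal class of K. Let (a, b, c) ∈ O_K³ be a non-trivial solution of x^p + y^p = 2^r z^p of prime exponent p. Then there exist ξ ∈ K* and m ∈ H such that (a', b', c') := (ξa, ξb, ξc) lies in O_K³, is a solution of x^p + y^p = 2^r z^p, and the ideal a'O_K + b'O_K + c'O_K equals m. -/
/-!
If `m ∈ H` lies in the ideal class of `I = (a, b, c)`, then `x m = y I` for some nonzero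
`x, y ∈ O_K`. Scaling by `ξ = y / x` sends `a, b, c` to elements `a', b', c'` of `m` that
generate `m` (cancel `x` in `x (a', b', c') = y I = x m`), and the equation, being
homogeneous, survives the scaling.
-/

open NumberField IsDedekindDomain

open scoped Classical in
/-- The additive `P`-adic valuation on a number field `K`, normalized so that
`vP P x` is the exponent of `P` in the factorization of `x`, with `vP P 0 = 0`. -/
noncomputable def vP {K : Type} [Field K] [NumberField K]
    (P : HeightOneSpectrum (𝓞 K)) (x : K) : ℤ :=
  if hx : x = 0 then 0
  else - Multiplicative.toAdd (WithZero.unzero ((P.valuation K).ne_zero_iff.mpr hx))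

namespace Ideal

variable {R : Type*} [CommRing R]

theorem span_singleton_mul_sup_sup_span_singleton (x a b c : R) :
    span {x} * (span {a} ⊔ span {b} ⊔ span {c}) =
      span {x * a} ⊔ span {x * b} ⊔ span {x * c} := by
  simp only [mul_sup, span_singleton_mul_span_singleton]

theorem exists_mul_eq_mul_and_sup_eq_of_span_singleton_mul_eq [IsDomain R]
    {x y a b c : R} {J : Ideal R} (hx : x ≠ 0)
    (h : span {x} * J = span {y} * (span {a} ⊔ span {b} ⊔ span {c})) :
    ∃ a' b' c' : R, x * a' = y * a ∧ x * b' = y * b ∧ x * c' = y * c ∧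
      span {a'} ⊔ span {b'} ⊔ span {c'} = J := by
  have lift : ∀ t ∈ span {a} ⊔ span {b} ⊔ span {c}, ∃ t' ∈ J, x * t' = y * t :=
    ((span_singleton_mul_eq_span_singleton_mul _ _).mp h).2
  obtain ⟨a', -, ha'⟩ := lift a (mem_sup_left (mem_sup_left (mem_span_singleton_self a)))
  obtain ⟨b', -, hb'⟩ := lift b (mem_sup_left (mem_sup_right (mem_span_singleton_self b)))
  obtain ⟨c', -, hc'⟩ := lift c (mem_sup_right (mem_span_singleton_self c))
  refine ⟨a', b', c', ha', hb', hc', (span_singleton_mul_right_inj hx).mp ?_⟩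
  rw [h, span_singleton_mul_sup_sup_span_singleton, span_singleton_mul_sup_sup_span_singleton,
    ha', hb', hc']

end Ideal

theorem IsFractionRing.algebraMap_eq_div_mul_of_mul_eq_mul {R K : Type*} [CommRing R]
    [Field K] [Algebra R K] [IsFractionRing R K] {x y t t' : R} (hx : x ≠ 0)
    (h : x * t' = y * t) :
    algebraMap R K t' = algebraMap R K y / algebraMap R K x * algebraMap R K t := by
  have hxK : algebraMap R K x ≠ 0 := (IsFractionRing.to_map_eq_zero_iff).not.mpr hx
  rw [div_mul_eq_mul_div, eq_div_iff hxK, ← map_mul, ← map_mul, mul_comm, h]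

theorem add_pow_eq_mul_pow_of_map_eq_mul {R S : Type*} [CommRing R] [CommRing S]
    {f : R →+* S} (hf : Function.Injective f) {a b c a' b' c' k : R} {ξ : S} (n : ℕ)
    (ha : f a' = ξ * f a) (hb : f b' = ξ * f b) (hc : f c' = ξ * f c)
    (h : a ^ n + b ^ n = k * c ^ n) :
    a' ^ n + b' ^ n = k * c' ^ n := by
  apply hf
  have hS := congrArg f h
  simp only [map_add, map_mul, map_pow] at hS ⊢
  rw [ha, hb, hc]
  linear_combination ξ ^ n * hS

theorem ClassGroup.exists_span_singleton_mul_eq_of_forall_mk0_mem {R : Type*} [CommRing R]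
    [IsDedekindDomain R] (H : Set (Ideal R))
    (hH : ∀ C : ClassGroup R, ∃ m ∈ H, ∃ hm : m ∈ nonZeroDivisors (Ideal R), ClassGroup.mk0 ⟨m, hm⟩ = C)
    {I : Ideal R} (hI : I ≠ ⊥) :
    ∃ m ∈ H, ∃ x y : R, x ≠ 0 ∧ y ≠ 0 ∧ Ideal.span {x} * m = Ideal.span {y} * I := by
  obtain ⟨m, hmH, hm, hmI⟩ := hH (ClassGroup.mk0 ⟨I, mem_nonZeroDivisors_of_ne_zero hI⟩)
  obtain ⟨x, y, hx, hy, hxy⟩ := ClassGroup.mk0_eq_mk0_iff.mp hmI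
  exact ⟨m, hmH, x, y, hx, hy, hxy⟩

theorem exists_scaled_triple_sup_eq_mem {R K : Type*} [CommRing R] [IsDedekindDomain R]
    [Field K] [Algebra R K] [IsFractionRing R K] (H : Set (Ideal R))
    (hH : ∀ C : ClassGroup R, ∃ m ∈ H, ∃ hm : m ∈ nonZeroDivisors (Ideal R), ClassGroup.mk0 ⟨m, hm⟩ = C)
    {a b c : R} (habc : Ideal.span {a} ⊔ Ideal.span {b} ⊔ Ideal.span {c} ≠ ⊥) :
    ∃ (ξ : K) (m : Ideal R) (a' b' c' : R), ξ ≠ 0 ∧ m ∈ H ∧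
      algebraMap R K a' = ξ * algebraMap R K a ∧
      algebraMap R K b' = ξ * algebraMap R K b ∧
      algebraMap R K c' = ξ * algebraMap R K c ∧
      Ideal.span {a'} ⊔ Ideal.span {b'} ⊔ Ideal.span {c'} = m := by
  obtain ⟨m, hmH, x, y, hx, hy, hxy⟩ :=
    ClassGroup.exists_span_singleton_mul_eq_of_forall_mk0_mem H hH habc
  obtain ⟨a', b', c', ha', hb', hc', hm⟩ :=
    Ideal.exists_mul_eq_mul_and_sup_eq_of_span_singleton_mul_eq hx hxy
  have hξ : algebraMap R K y / algebraMap R K x ≠ 0 :=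
    div_ne_zero ((IsFractionRing.to_map_eq_zero_iff).not.mpr hy)
      ((IsFractionRing.to_map_eq_zero_iff).not.mpr hx)
  exact ⟨_, m, a', b', c', hξ, hmH,
    IsFractionRing.algebraMap_eq_div_mul_of_mul_eq_mul hx ha',
    IsFractionRing.algebraMap_eq_div_mul_of_mul_eq_mul hx hb',
    IsFractionRing.algebraMap_eq_div_mul_of_mul_eq_mul hx hc', hm⟩

theorem exists_scaled_solution_with_gcd_in_H_general
    (K : Type) [Field K] [NumberField K]
    (H : Finset (Ideal (𝓞 K)))
    (hHrep : ∀ C : ClassGroup (𝓞 K), ∃ m ∈ H,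
      ∃ hm : m ∈ nonZeroDivisors (Ideal (𝓞 K)), ClassGroup.mk0 ⟨m, hm⟩ = C)
    (p : ℕ) (r : ℕ) (a b c : 𝓞 K)
    (hsol : a ^ p + b ^ p = 2 ^ r * c ^ p)
    (hnontriv : ¬ (a * b * c = 0 ∨ a = b ∨ a = -b)) :
    ∃ (ξ : K) (m : Ideal (𝓞 K)) (a' b' c' : 𝓞 K), ξ ≠ 0 ∧ m ∈ H ∧
      algebraMap (𝓞 K) K a' = ξ * algebraMap (𝓞 K) K a ∧
      algebraMap (𝓞 K) K b' = ξ * algebraMap (𝓞 K) K b ∧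
      algebraMap (𝓞 K) K c' = ξ * algebraMap (𝓞 K) K c ∧
      a' ^ p + b' ^ p = 2 ^ r * c' ^ p ∧
      Ideal.span {a'} ⊔ Ideal.span {b'} ⊔ Ideal.span {c'} = m := by
  have ha : a ≠ 0 := fun ha ↦ hnontriv (Or.inl (by simp [ha]))
  have habc : Ideal.span {a} ⊔ Ideal.span {b} ⊔ Ideal.span {c} ≠ ⊥ := by
    simp [sup_eq_bot_iff, ha]
  obtain ⟨ξ, m, a', b', c', hξ, hmH, ha', hb', hc', hm⟩ :=
    exists_scaled_triple_sup_eq_mem (K := K) (H : Set (Ideal (𝓞 K))) hHrep habc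
  exact ⟨ξ, m, a', b', c', hξ, hmH, ha', hb', hc',
    add_pow_eq_mul_pow_of_map_eq_mul (IsFractionRing.injective (𝓞 K) K) p ha' hb' hc' hsol, hm⟩

/-- **Scaling a solution so that its ideal of coefficients lies in `H`** (Lemma:
integrality of solution). `H` is a finite set of prime ideals of `O_K`, none dividing `2`,
representing every ideal class of `K`. Any non-trivial solution `(a,b,c)` of
`x^p + y^p = 2^r z^p` can be scaled by some `ξ ∈ K*` to a solution `(a',b',c') ∈ O_K³`
with `a'O_K + b'O_K + c'O_K = m` for some `m ∈ H`. -/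
theorem exists_scaled_solution_with_gcd_in_H
    (K : Type) [Field K] [NumberField K]
    (htotallyReal : ∀ v : InfinitePlace K, v.IsReal)
    (H : Finset (Ideal (𝓞 K)))
    (hHprime : ∀ m ∈ H, m.IsPrime)
    (hHodd : ∀ m ∈ H, ¬ (m ∣ Ideal.span {(2 : 𝓞 K)}))
    (hHrep : ∀ C : ClassGroup (𝓞 K), ∃ m ∈ H,
      ∃ hm : m ∈ nonZeroDivisors (Ideal (𝓞 K)), ClassGroup.mk0 ⟨m, hm⟩ = C)
    (p : ℕ) (hp : p.Prime) (r : ℕ) (a b c : 𝓞 K)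
    (hsol : a ^ p + b ^ p = 2 ^ r * c ^ p)
    (hnontriv : ¬ (a * b * c = 0 ∨ a = b ∨ a = -b)) :
    ∃ (ξ : K) (m : Ideal (𝓞 K)) (a' b' c' : 𝓞 K), ξ ≠ 0 ∧ m ∈ H ∧
      algebraMap (𝓞 K) K a' = ξ * algebraMap (𝓞 K) K a ∧
      algebraMap (𝓞 K) K b' = ξ * algebraMap (𝓞 K) K b ∧
      algebraMap (𝓞 K) K c' = ξ * algebraMap (𝓞 K) K c ∧
      a' ^ p + b' ^ p = 2 ^ r * c' ^ p ∧
      Ideal.span {a'} ⊔ Ideal.span {b'} ⊔ Ideal.span {c'} = m :=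
  exists_scaled_solution_with_gcd_in_H_general K H hHrep p r a b c hsol hnontriv
end

section
/- Let K be a totally real number field of degree n = [K : ℚ] in which 2 is inert, with q = 2O_K the prime above 2, and let l > 5 be a rational prime with gcd(n, l−1) = 1 such that l is totally ramified in K. Then every solution (λ, μ) of the S_K-unit equation λ + μ = 1 with λ, μ ∈ O_{S_K}^* satisfies max(|v_q(λ)|, |v_q(μ)|) = 1. -/
open NumberField IsDedekindDomain

/-!
Since `2` is inert, an `S_K`-unit is `u * 2 ^ a` with `u ∈ O_K^*` and `a = v_q`, and comparing
`q`-adic valuations in `λ + μ = 1` leaves, up to symmetry, two shapes: `u + 2 ^ k * w = 1` with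
`k = max (|v_q λ|, |v_q μ|)`, or `u + w = 2 ^ t` with `t = -v_q λ = -v_q μ`, which rescales to
`(-w / u) + 2 ^ t * u⁻¹ = 1`. So it suffices that `u + 2 ^ k * w = 1` forces `k = 1`.

Let `𝔩` be the prime with `𝔩 ^ n = l O_K`. Then `O_K / 𝔩 = 𝔽_l`, and modulo `l` the matrix of
multiplication by a unit `u` is the scalar `ū` plus a nilpotent matrix, so `N(u) ≡ ū ^ n`. As `n` is
odd and prime to `l - 1`, this gives `u ≡ N(u) = ±1 (mod 𝔩)`. For `k = 0` we get `1 ≡ ±1 ± 1`,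
impossible as `l > 3`. For `k ≥ 2`, `u ≡ 1 (mod 4)` forces `N(u) ≡ 1 (mod 4)`, so `N(u) = 1` and
`u ≡ 1 (mod 𝔩)`, whence `2 ∈ 𝔩`, impossible as `l ≠ 2`.
-/

open IsDedekindDomain.HeightOneSpectrum

section DedekindDomain

variable {R K : Type*} [CommRing R] [IsDedekindDomain R] [Field K] [Algebra R K]
  [IsFractionRing R K]

theorem exists_unit_of_forall_valuation_eq_one {y : Kˣ}
    (hy : ∀ v : HeightOneSpectrum R, v.valuation K y = 1) :
    ∃ u : Rˣ, algebraMap R K u = y := by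
  obtain ⟨r, hr⟩ := mem_integers_of_valuation_le_one K (y : K) fun v ↦ (hy v).le
  obtain ⟨s, hs⟩ := mem_integers_of_valuation_le_one K ((y⁻¹ : Kˣ) : K) fun v ↦ by
    rw [Units.val_inv_eq_inv_val, map_inv₀, hy, inv_one]
  have hrs : r * s = 1 := IsFractionRing.injective R K <| by simp [hr, hs]
  exact ⟨⟨r, s, hrs, mul_comm s r ▸ hrs⟩, hr⟩

theorem setOf_mem_asIdeal_eq_singleton {q : HeightOneSpectrum R} {π : R}
    (hq : q.asIdeal = Ideal.span {π}) :
    {v : HeightOneSpectrum R | π ∈ v.asIdeal} = {q} := by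
  ext v
  refine ⟨fun hv ↦ ?_, ?_⟩
  · have hle : q.asIdeal ≤ v.asIdeal := by rwa [hq, Ideal.span_singleton_le_iff_mem]
    exact (HeightOneSpectrum.ext (q.isMaximal.eq_of_le v.isPrime.ne_top hle)).symm
  · rintro rfl
    show π ∈ v.asIdeal
    exact hq ▸ Ideal.mem_span_singleton_self π

theorem valuation_eq_one_of_ne {q v : HeightOneSpectrum R} {π : R}
    (hq : q.asIdeal = Ideal.span {π}) (hv : v ≠ q) : v.valuation K (algebraMap R K π) = 1 :=
  (v.valuation_eq_one_iff_notMem).mpr fun hπ ↦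
    hv ((setOf_mem_asIdeal_eq_singleton hq).subset hπ)

end DedekindDomain

section NumberField

variable {K : Type} [Field K] [NumberField K]

theorem valuation_eq_exp_neg_vP (q : HeightOneSpectrum (𝓞 K)) {x : K} (hx : x ≠ 0) :
    q.valuation K x = WithZero.exp (-vP q x) := by
  rw [vP, dif_neg hx, neg_neg, WithZero.exp, ofAdd_toAdd, WithZero.coe_unzero]

theorem exists_unit_eq_mul_zpow_vP {q : HeightOneSpectrum (𝓞 K)} {π : 𝓞 K}
    (hq : q.asIdeal = Ideal.span {π}) {x : Kˣ} (hx : x ∈ ({q} : Set _).unit K) :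
    ∃ u : (𝓞 K)ˣ, (x : K) = algebraMap (𝓞 K) K u * algebraMap (𝓞 K) K π ^ vP q x := by
  have hπ0 : π ≠ 0 := fun h ↦ q.ne_bot (hq ▸ Ideal.span_singleton_eq_bot.mpr h)
  have hπ : algebraMap (𝓞 K) K π ≠ 0 :=
    (map_ne_zero_iff _ (IsFractionRing.injective _ K)).mpr hπ0
  set y : Kˣ := x * Units.mk0 _ hπ ^ (-vP q x) with hy
  have hvy : ∀ v : HeightOneSpectrum (𝓞 K), v.valuation K y = 1 := by
    intro v
    rw [hy, Units.val_mul, Units.val_zpow_eq_zpow_val, Units.val_mk0, map_mul, map_zpow₀]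
    by_cases hvq : v = q
    · subst hvq
      rw [valuation_eq_exp_neg_vP v x.ne_zero, valuation_of_algebraMap,
        v.intValuation_singleton hπ0 hq, ← WithZero.exp_zsmul, ← WithZero.exp_add]
      simp
    · rw [Set.unit_valuation_eq_one _ K ⟨x, hx⟩ hvq, valuation_eq_one_of_ne hq hvq, one_zpow,
        one_mul]
  obtain ⟨u, hu⟩ := exists_unit_of_forall_valuation_eq_one hvy
  refine ⟨u, ?_⟩
  rw [hu, hy, Units.val_mul, Units.val_zpow_eq_zpow_val, Units.val_mk0, mul_assoc,
    ← zpow_add₀ hπ, neg_add_cancel, zpow_zero, mul_one]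

end NumberField

theorem exponents_of_unit_mul_zpow_add_eq_one {R K : Type*} [CommRing R] [IsDomain R] [Field K]
    [Algebra R K] [IsFractionRing R K] {π : R} (hπ0 : π ≠ 0) (hπ : ¬IsUnit π) {u w : Rˣ}
    {a b : ℤ} (hab : a ≤ b)
    (h : algebraMap R K u * algebraMap R K π ^ a + algebraMap R K w * algebraMap R K π ^ b = 1) :
    (a = 0 ∧ ∃ k : ℕ, b = k ∧ (u : R) + π ^ k * w = 1) ∨
      ∃ t : ℕ, a = -t ∧ b = -t ∧ (u : R) + w = π ^ t := by
  have hπK : algebraMap R K π ≠ 0 := (map_ne_zero_iff _ (IsFractionRing.injective R K)).mpr hπ0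
  obtain ⟨d, rfl⟩ : ∃ d : ℕ, b = a + d := ⟨(b - a).toNat, by omega⟩
  rcases le_or_gt 0 a with ha | ha
  · lift a to ℕ using ha
    have hR : (u : R) * π ^ a + π ^ (a + d) * w = 1 := IsFractionRing.injective R K <| by
      rw [map_one, ← h, ← Nat.cast_add, zpow_natCast, zpow_natCast, map_add, map_mul, map_mul,
        map_pow, map_pow, mul_comm (algebraMap R K π ^ (a + d))]
    obtain rfl : a = 0 := by
      by_contra ha0
      refine hπ (isUnit_of_dvd_one (hR ▸ dvd_add ?_ ?_))
      · exact (dvd_pow_self π ha0).mul_left _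
      · exact (dvd_pow_self π (by omega)).mul_right _
    exact Or.inl ⟨rfl, d, by simp, by simpa using hR⟩
  · obtain ⟨t, rfl⟩ : ∃ t : ℕ, a = -t := ⟨a.natAbs, by omega⟩
    have hR : (u : R) + π ^ d * w = π ^ t := IsFractionRing.injective R K <| by
      rw [map_pow, ← one_mul (algebraMap R K π ^ t), ← h, ← zpow_natCast, add_mul, mul_assoc,
        mul_assoc, ← zpow_add₀ hπK, ← zpow_add₀ hπK, neg_add_cancel, neg_add_cancel_comm,
        zpow_zero, zpow_natCast, map_add, map_mul, map_pow, mul_one, mul_comm]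
    obtain rfl : d = 0 := by
      by_contra hd
      refine hπ (isUnit_of_dvd_unit ?_ u.isUnit)
      rw [eq_sub_of_add_eq hR]
      exact dvd_sub (dvd_pow_self π (by omega)) ((dvd_pow_self π hd).mul_right _)
    exact Or.inr ⟨t, rfl, by simp, by simpa using hR⟩

section NormCongruence

open Polynomial

variable {S : Type*} [CommRing S] [Module.Free ℤ S] [Module.Finite ℤ S]

noncomputable def leftMulMatrixMod (A : Type*) [CommRing A] :
    S →+* Matrix (Module.Free.ChooseBasisIndex ℤ S) (Module.Free.ChooseBasisIndex ℤ S) A :=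
  (Int.castRingHom A).mapMatrix.comp
    (Algebra.leftMulMatrix (Module.Free.chooseBasis ℤ S)).toRingHom

variable {A : Type*} [CommRing A]

theorem det_leftMulMatrixMod (x : S) :
    (leftMulMatrixMod A x).det = (Algebra.norm ℤ x : A) := by
  rw [Algebra.norm_eq_matrix_det (Module.Free.chooseBasis ℤ S)]
  exact ((Int.castRingHom A).map_det _).symm

theorem leftMulMatrixMod_eq_zero_of_natCast_dvd {k : ℕ} (hk : (k : A) = 0) {x : S}
    (hx : (k : S) ∣ x) : leftMulMatrixMod A x = 0 := by
  obtain ⟨y, rfl⟩ := hx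
  rw [map_mul, map_natCast, ← Matrix.diagonal_natCast, hk, Matrix.diagonal_zero, zero_mul]

theorem norm_modEq_of_natCast_dvd_sub {k : ℕ} {x y : S} (h : (k : S) ∣ x - y) :
    Algebra.norm ℤ x ≡ Algebra.norm ℤ y [ZMOD k] := by
  have hxy := leftMulMatrixMod_eq_zero_of_natCast_dvd (ZMod.natCast_self k) h
  rw [map_sub, sub_eq_zero] at hxy
  rw [← ZMod.intCast_eq_intCast_iff, ← det_leftMulMatrixMod, ← det_leftMulMatrixMod, hxy]

theorem norm_eq_one_of_four_dvd_sub_one (ε : Sˣ) (h : (4 : S) ∣ ε - 1) :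
    Algebra.norm ℤ (ε : S) = 1 := by
  have hmod := norm_modEq_of_natCast_dvd_sub (k := 4) (by exact_mod_cast h)
  rw [map_one] at hmod
  rcases Int.isUnit_iff.mp (ε.isUnit.map (Algebra.norm ℤ)) with hε | hε
  · exact hε
  · rw [hε] at hmod
    exact absurd hmod (by decide)

theorem norm_intCast_eq_pow_of_dvd_sub_pow {p : ℕ} [Fact p.Prime] {x : S} {m : ℤ} {j : ℕ}
    (h : (p : S) ∣ (x - m) ^ j) :
    (Algebra.norm ℤ x : ZMod p) = (m : ZMod p) ^ Module.finrank ℤ S := by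
  set D := leftMulMatrixMod (ZMod p) (x - m)
  have hD : IsNilpotent D :=
    ⟨j, by rw [← map_pow]; exact leftMulMatrixMod_eq_zero_of_natCast_dvd (ZMod.natCast_self p) h⟩
  have hchar : D.charpoly = X ^ Fintype.card (Module.Free.ChooseBasisIndex ℤ S) :=
    sub_eq_zero.mp (Matrix.isNilpotent_charpoly_sub_pow_of_isNilpotent hD).eq_zero
  have hx : leftMulMatrixMod (ZMod p) x = -(Matrix.scalar _ (-(m : ZMod p)) - D) := by
    rw [map_neg, ← neg_add', neg_neg, map_intCast,
      ← map_intCast (leftMulMatrixMod (S := S) (ZMod p)), ← map_add, add_sub_cancel]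
  rw [← det_leftMulMatrixMod, hx, Matrix.det_neg, ← Matrix.eval_charpoly, hchar, eval_pow, eval_X,
    ← mul_pow, neg_one_mul, neg_neg, Module.finrank_eq_card_chooseBasisIndex]

end NormCongruence

theorem exists_intCast_sub_mem_of_card_quotient {S : Type*} [CommRing S] {P : Ideal S} {p : ℕ}
    (hp : p.Prime) (hcard : Nat.card (S ⧸ P) = p) (x : S) : ∃ m : ℤ, x - m ∈ P := by
  have : Fact p.Prime := ⟨hp⟩
  have : Finite (S ⧸ P) := Nat.finite_of_card_ne_zero (hcard ▸ hp.ne_zero)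
  let : Fintype (S ⧸ P) := Fintype.ofFinite _
  let e := ZMod.ringEquivOfPrime (S ⧸ P) hp (Nat.card_eq_fintype_card (α := S ⧸ P) ▸ hcard)
  refine ⟨(e.symm (Ideal.Quotient.mk P x)).val, ?_⟩
  rw [← Ideal.Quotient.eq_zero_iff_mem, map_sub, map_intCast, Int.cast_natCast, ← map_natCast e,
    ZMod.natCast_zmod_val, e.apply_symm_apply, sub_self]

theorem intCast_mem_iff_of_card_quotient {S : Type*} [CommRing S] {P : Ideal S} {p : ℕ}
    (hp : p.Prime) (hcard : Nat.card (S ⧸ P) = p) (k : ℤ) : (k : S) ∈ P ↔ (p : ℤ) ∣ k := by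
  have : Fact p.Prime := ⟨hp⟩
  have : Finite (S ⧸ P) := Nat.finite_of_card_ne_zero (hcard ▸ hp.ne_zero)
  let : Fintype (S ⧸ P) := Fintype.ofFinite _
  have : CharP (S ⧸ P) p :=
    charP_of_card_eq_prime (Nat.card_eq_fintype_card (α := S ⧸ P) ▸ hcard)
  rw [← Ideal.Quotient.eq_zero_iff_mem, map_intCast, CharP.intCast_eq_zero_iff (S ⧸ P) p]

section TotallyRamified

variable {S : Type*} [CommRing S] [IsDedekindDomain S] [Module.Free ℤ S] [Module.Finite ℤ S]
  {l : ℕ} {P : Ideal S}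

theorem card_quotient_of_span_eq_pow (hn : Module.finrank ℤ S ≠ 0)
    (hP : Ideal.span {(l : S)} = P ^ Module.finrank ℤ S) : Nat.card (S ⧸ P) = l := by
  have hnorm : Ideal.absNorm P ^ Module.finrank ℤ S = l ^ Module.finrank ℤ S := by
    rw [← map_pow, ← hP, Ideal.absNorm_span_singleton, ← map_natCast (algebraMap ℤ S),
      Algebra.norm_algebraMap, Int.natAbs_pow, Int.natAbs_natCast]
  rw [← Submodule.cardQuot_apply, ← Ideal.absNorm_apply, Nat.pow_left_injective hn hnorm]

variable (hl : l.Prime) (hodd : Odd (Module.finrank ℤ S))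
  (hgcd : (Module.finrank ℤ S).Coprime (l - 1))
  (hP : Ideal.span {(l : S)} = P ^ Module.finrank ℤ S)
include hl hodd hgcd hP

theorem sub_norm_mem_of_span_eq_pow (u : Sˣ) : (u : S) - Algebra.norm ℤ (u : S) ∈ P := by
  have : Fact l.Prime := ⟨hl⟩
  set n := Module.finrank ℤ S
  set ε := Algebra.norm ℤ (u : S)
  have hcard := card_quotient_of_span_eq_pow hodd.pos.ne' hP
  obtain ⟨m, hm⟩ := exists_intCast_sub_mem_of_card_quotient hl hcard u
  have hpow : (ε : ZMod l) = (m : ZMod l) ^ n := norm_intCast_eq_pow_of_dvd_sub_pow (j := n) <| by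
    rw [← Ideal.mem_span_singleton, hP]
    exact Ideal.pow_mem_pow hm n
  have hεε : ε * ε = 1 := Int.isUnit_mul_self (u.isUnit.map _)
  have hεn : ε ^ n = ε := by
    rcases Int.isUnit_iff.mp (u.isUnit.map (Algebra.norm ℤ)) with h | h <;>
      simp [ε, h, hodd.neg_one_pow]
  -- `m ε` is an `n`-th root of unity in `𝔽_l`, hence trivial as `gcd(n, l - 1) = 1`
  have hmεn : ((m : ZMod l) * ε) ^ n = 1 := by
    rw [mul_pow, ← hpow, ← Int.cast_pow, hεn, ← Int.cast_mul, hεε, Int.cast_one]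
  have hmε : (m : ZMod l) * ε = 1 := by
    refine (pow_eq_one_iff_of_coprime hgcd).mp ⟨hmεn, ZMod.pow_card_sub_one_eq_one fun h0 ↦ ?_⟩
    simp [h0, zero_pow hodd.pos.ne'] at hmεn
  have hmε' : (m : ZMod l) = ε := by
    rw [← mul_one (m : ZMod l), ← Int.cast_one, ← hεε, Int.cast_mul, ← mul_assoc, hmε, one_mul]
  have hεm : ((ε - m : ℤ) : S) ∈ P := by
    rw [intCast_mem_iff_of_card_quotient hl hcard, ← ZMod.intCast_eq_intCast_iff_dvd_sub]
    exact hmε'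
  convert P.sub_mem hm hεm using 1
  push_cast
  ring

theorem units_add_ne_one (hl3 : 3 < l) (u w : Sˣ) : (u : S) + w ≠ 1 := by
  intro h
  have hmem : ((1 - Algebra.norm ℤ (u : S) - Algebra.norm ℤ (w : S) : ℤ) : S) ∈ P := by
    convert P.add_mem (sub_norm_mem_of_span_eq_pow hl hodd hgcd hP u)
      (sub_norm_mem_of_span_eq_pow hl hodd hgcd hP w) using 1
    push_cast
    linear_combination -h
  rw [intCast_mem_iff_of_card_quotient hl (card_quotient_of_span_eq_pow hodd.pos.ne' hP),
    Int.natCast_dvd] at hmem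
  rcases Int.isUnit_iff.mp (u.isUnit.map (Algebra.norm ℤ)) with hu | hu <;>
  rcases Int.isUnit_iff.mp (w.isUnit.map (Algebra.norm ℤ)) with hw | hw <;>
  · simp only [hu, hw] at hmem
    have := Nat.le_of_dvd (by norm_num) hmem
    omega

theorem unit_add_two_pow_mul_unit_ne_one (hl2 : l ≠ 2) {k : ℕ} (hk : 2 ≤ k) (u w : Sˣ) :
    (u : S) + 2 ^ k * w ≠ 1 := by
  intro h
  obtain ⟨j, rfl⟩ := Nat.exists_eq_add_of_le hk
  have h4 : (4 : S) ∣ u - 1 := Dvd.intro (-(2 ^ j * w)) (by linear_combination -h)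
  have hu : (u : S) - 1 ∈ P := by
    simpa [norm_eq_one_of_four_dvd_sub_one u h4] using
      sub_norm_mem_of_span_eq_pow hl hodd hgcd hP u
  have h2 : (((2 ^ (2 + j) : ℕ) : ℤ) : S) ∈ P := by
    rw [← Ideal.mul_unit_mem_iff_mem P w.isUnit]
    convert P.neg_mem hu using 1
    push_cast
    linear_combination h
  rw [intCast_mem_iff_of_card_quotient hl (card_quotient_of_span_eq_pow hodd.pos.ne' hP),
    Int.natCast_dvd_natCast] at h2
  exact hl2 ((Nat.prime_dvd_prime_iff_eq hl Nat.prime_two).mp (hl.dvd_of_dvd_pow h2))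

theorem eq_one_of_unit_add_two_pow_mul_unit_eq_one (hl3 : 3 < l) {k : ℕ} {u w : Sˣ}
    (h : (u : S) + 2 ^ k * w = 1) : k = 1 := by
  obtain _ | _ | k := k
  · exact absurd (by simpa using h) (units_add_ne_one hl hodd hgcd hP hl3 u w)
  · rfl
  · exact absurd h (unit_add_two_pow_mul_unit_ne_one hl hodd hgcd hP (by omega) (by omega) u w)

end TotallyRamified

theorem sunit_bound_of_two_inert_totally_ramified_general
    (K : Type) [Field K] [NumberField K]
    (n : ℕ) (hn : n = Module.finrank ℚ K)
    (l : ℕ) (hl : l.Prime) (hl5 : 5 < l) (hgcd : Nat.gcd n (l - 1) = 1)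
    (hram : ∃ q' : Ideal (𝓞 K), q'.IsPrime ∧ Ideal.span {(l : 𝓞 K)} = q' ^ n)
    (q : HeightOneSpectrum (𝓞 K)) (hq : q.asIdeal = Ideal.span {(2 : 𝓞 K)})
    (SK : Set (HeightOneSpectrum (𝓞 K)))
    (hSK : SK = {P : HeightOneSpectrum (𝓞 K) | (2 : 𝓞 K) ∈ P.asIdeal}) :
    ∀ lam mu : Kˣ, lam ∈ SK.unit K → mu ∈ SK.unit K →
      (lam : K) + (mu : K) = 1 →
      max |vP q (lam : K)| |vP q (mu : K)| = 1 := by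
  obtain ⟨P, -, hP⟩ := hram
  rw [hn, ← RingOfIntegers.rank] at hP hgcd
  have hodd : Odd (Module.finrank ℤ (𝓞 K)) := by
    refine Nat.not_even_iff_odd.mp fun heven ↦ ?_
    have h2 := Nat.dvd_gcd heven.two_dvd (hl.even_sub_one (by omega)).two_dvd
    rw [hgcd] at h2
    omega
  have h2 : ¬IsUnit (2 : 𝓞 K) := fun h2 ↦
    q.isPrime.ne_top (hq ▸ Ideal.span_singleton_eq_top.mpr h2)
  rw [hSK, setOf_mem_asIdeal_eq_singleton hq]
  intro lam mu hlam hmu h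
  wlog hab : vP q lam ≤ vP q mu generalizing lam mu
  · rw [max_comm]
    exact this mu lam hmu hlam (by rwa [add_comm]) (le_of_not_ge hab)
  obtain ⟨u, hu⟩ := exists_unit_eq_mul_zpow_vP hq hlam
  obtain ⟨w, hw⟩ := exists_unit_eq_mul_zpow_vP hq hmu
  have hl3 : 3 < l := by omega
  rcases exponents_of_unit_mul_zpow_add_eq_one two_ne_zero h2 hab (hu ▸ hw ▸ h) with
    ⟨ha, k, hb, hk⟩ | ⟨t, ha, hb, ht⟩
  · rw [ha, hb, eq_one_of_unit_add_two_pow_mul_unit_eq_one hl hodd hgcd hP hl3 hk]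
    simp
  · have ht' : ((-w * u⁻¹ : (𝓞 K)ˣ) : 𝓞 K) + 2 ^ t * (u⁻¹ : (𝓞 K)ˣ) = 1 := by
      rw [← ht, Units.val_mul, Units.val_neg]
      linear_combination u.mul_inv
    rw [ha, hb, eq_one_of_unit_add_two_pow_mul_unit_eq_one hl hodd hgcd hP hl3 ht']
    simp

/-- **`S_K`-unit bound when `2` is inert and some `l` is totally ramified**. `K` is a
totally real number field of degree `n` in which `2` is inert, with `q = 2O_K` the prime
above `2`, and `l > 5` is a rational prime with `gcd(n, l - 1) = 1` which is totally
ramified in `K`. Then every solution of the `S_K`-unit equation `λ + μ = 1` satisfies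
`max(|v_q λ|, |v_q μ|) = 1`. -/
theorem sunit_bound_of_two_inert_totally_ramified
    (K : Type) [Field K] [NumberField K]
    (htotallyReal : ∀ v : InfinitePlace K, v.IsReal)
    (n : ℕ) (hn : n = Module.finrank ℚ K)
    (l : ℕ) (hl : l.Prime) (hl5 : 5 < l) (hgcd : Nat.gcd n (l - 1) = 1)
    (hram : ∃ q' : Ideal (𝓞 K), q'.IsPrime ∧ Ideal.span {(l : 𝓞 K)} = q' ^ n)
    (q : HeightOneSpectrum (𝓞 K)) (hq : q.asIdeal = Ideal.span {(2 : 𝓞 K)})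
    (SK : Set (HeightOneSpectrum (𝓞 K)))
    (hSK : SK = {P : HeightOneSpectrum (𝓞 K) | (2 : 𝓞 K) ∈ P.asIdeal}) :
    ∀ lam mu : Kˣ, lam ∈ SK.unit K → mu ∈ SK.unit K →
      (lam : K) + (mu : K) = 1 →
      max |vP q (lam : K)| |vP q (mu : K)| = 1 :=
  sunit_bound_of_two_inert_totally_ramified_general K n hn l hl hl5 hgcd hram q hq SK hSK
end

section
/- Let K be a number field, p a prime, r ∈ ℕ, and let (a, b, c) ∈ O_K³ be a non-trivial solution of a^p + b^p = 2^r c^p. Let E be the Weierstrass curve Y² = X(X − a^p)(X + b^p) with discriminant Δ_E = 2^{4+2r}(abc)^{2p} and c₄ = 2^4(a^{2p} + 2^r b^p c^p). Let q be a prime ideal of O_K with q ∤ 2 such that q divides exactly one of a, b, c. Then v_q(c₄) = 0 and v_q(Δ_E) = 2p·v_q(abc); in particular p divides v_q(Δ_E). -/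
/-!
Put `A = aᵖ` and `B = bᵖ`. The Frey curve has `c₄ = 2⁴(A² + AB + B²)` and
`Δ = 2⁴(AB(A + B))² = 2^(2r+4)(abc)^(2p)`, and `2` is a unit at `q`, so `v_q(Δ) = 2p·v_q(abc)`.
Since `q` divides one of `A`, `B`, `A + B = 2ʳcᵖ`, modulo `q` the form `A² + AB + B²` is `B²`, `A²`
or `-AB`; so it lies in `q` only if `q` divides both `A` and `B`, which is excluded.
-/

open NumberField IsDedekindDomain

section Valuation

variable {K : Type} [Field K] [NumberField K] (q : HeightOneSpectrum (𝓞 K))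

theorem vP_eq_neg_log_valuation (x : K) : vP q x = -WithZero.log (q.valuation K x) := by
  by_cases hx : x = 0
  · simp [vP, hx]
  · rw [vP, dif_neg hx, WithZero.toAdd_unzero_eq_log]

theorem vP_pow (x : K) (n : ℕ) : vP q (x ^ n) = n * vP q x := by
  simp [vP_eq_neg_log_valuation]

theorem vP_algebraMap_mul_of_notMem {u : 𝓞 K} (hu : u ∉ q.asIdeal) (x : K) :
    vP q (algebraMap (𝓞 K) K u * x) = vP q x := by
  have hv : q.valuation K (algebraMap (𝓞 K) K u) = 1 := by
    rwa [HeightOneSpectrum.valuation_of_algebraMap, HeightOneSpectrum.intValuation_eq_one_iff]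
  rw [vP_eq_neg_log_valuation, map_mul, hv, one_mul, ← vP_eq_neg_log_valuation]

theorem vP_algebraMap_eq_zero_of_notMem {u : 𝓞 K} (hu : u ∉ q.asIdeal) :
    vP q (algebraMap (𝓞 K) K u) = 0 := by
  rw [← mul_one (algebraMap (𝓞 K) K u), vP_algebraMap_mul_of_notMem q hu, vP_eq_neg_log_valuation,
    map_one, WithZero.log_one, neg_zero]

end Valuation

section FreyCurve

variable {R : Type*} [CommRing R]

def freyCurve (A B : R) : WeierstrassCurve R :=
  { a₁ := 0, a₂ := B - A, a₃ := 0, a₄ := -(A * B), a₆ := 0 }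

theorem freyCurve_c₄ (A B : R) : (freyCurve A B).c₄ = 2 ^ 4 * (A ^ 2 + A * B + B ^ 2) := by
  simp only [freyCurve, WeierstrassCurve.c₄, WeierstrassCurve.b₂, WeierstrassCurve.b₄]
  ring

theorem freyCurve_Δ (A B : R) : (freyCurve A B).Δ = 2 ^ 4 * (A * B * (A + B)) ^ 2 := by
  simp only [freyCurve, WeierstrassCurve.Δ, WeierstrassCurve.b₂, WeierstrassCurve.b₄,
    WeierstrassCurve.b₆, WeierstrassCurve.b₈]
  ring

theorem Ideal.IsPrime.mem_and_mem_of_sq_add_mul_add_sq_mem {P : Ideal R} (hP : P.IsPrime)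
    {x y : R} (h : x ∈ P ∨ y ∈ P ∨ x + y ∈ P) (hxy : x ^ 2 + x * y + y ^ 2 ∈ P) :
    x ∈ P ∧ y ∈ P := by
  have hx_or_hy : x ∈ P ∨ y ∈ P := by
    rcases h with hx | hy | hsum
    · exact .inl hx
    · exact .inr hy
    · refine hP.mem_or_mem ?_
      convert P.sub_mem (P.pow_mem_of_mem hsum 2 two_pos) hxy using 1
      ring
  rcases hx_or_hy with hx | hy
  · have hy : y ^ 2 ∈ P := by
      convert P.sub_mem hxy (P.mul_mem_right (x + y) hx) using 1
      ring
    exact ⟨hx, hP.mem_of_pow_mem 2 hy⟩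
  · have hx : x ^ 2 ∈ P := by
      convert P.sub_mem hxy (P.mul_mem_left (x + y) hy) using 1
      ring
    exact ⟨hP.mem_of_pow_mem 2 hx, hy⟩

theorem freyCurve_c₄_notMem {P : Ideal R} (hP : P.IsPrime) {A B : R} (h2 : (2 : R) ∉ P)
    (h : A ∈ P ∨ B ∈ P ∨ A + B ∈ P) (hAB : A ∉ P ∨ B ∉ P) : (freyCurve A B).c₄ ∉ P := by
  rw [freyCurve_c₄]
  refine hP.mul_notMem (fun h16 => h2 (hP.mem_of_pow_mem 4 h16)) fun hS => ?_
  obtain ⟨hA, hB⟩ := hP.mem_and_mem_of_sq_add_mul_add_sq_mem h hS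
  tauto

end FreyCurve

theorem frey_curve_valuation_at_odd_primes_general
    (K : Type) [Field K] [NumberField K]
    (p : ℕ) (hp : p.Prime) (r : ℕ) (a b c : 𝓞 K)
    (hsol : a ^ p + b ^ p = 2 ^ r * c ^ p)
    (W : WeierstrassCurve (𝓞 K))
    (hW : W = { a₁ := 0, a₂ := b ^ p - a ^ p, a₃ := 0, a₄ := -(a ^ p * b ^ p), a₆ := 0 })
    (q : HeightOneSpectrum (𝓞 K)) (hq2 : (2 : 𝓞 K) ∉ q.asIdeal)
    (hexactlyOne :
      (a ∈ q.asIdeal ∧ b ∉ q.asIdeal ∧ c ∉ q.asIdeal) ∨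
      (a ∉ q.asIdeal ∧ b ∈ q.asIdeal ∧ c ∉ q.asIdeal) ∨
      (a ∉ q.asIdeal ∧ b ∉ q.asIdeal ∧ c ∈ q.asIdeal)) :
    vP q (algebraMap (𝓞 K) K W.c₄) = 0 ∧
    vP q (algebraMap (𝓞 K) K W.Δ) = 2 * p * vP q (algebraMap (𝓞 K) K (a * b * c)) ∧
    (p : ℤ) ∣ vP q (algebraMap (𝓞 K) K W.Δ) := by
  replace hW : W = freyCurve (a ^ p) (b ^ p) := hW
  have pow_mem_iff {x : 𝓞 K} : x ^ p ∈ q.asIdeal ↔ x ∈ q.asIdeal :=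
    q.isPrime.pow_mem_iff_mem p hp.pos
  have hc₄ : W.c₄ ∉ q.asIdeal := by
    refine hW ▸ freyCurve_c₄_notMem q.isPrime hq2 ?_ ?_ <;>
      simp only [pow_mem_iff, hsol, q.isPrime.mul_mem_iff_mem_or_mem] <;> tauto
  have hΔ : W.Δ = 2 ^ (2 * r + 4) * (a * b * c) ^ (2 * p) := by
    rw [hW, freyCurve_Δ, hsol]
    ring
  have hvΔ : vP q (algebraMap (𝓞 K) K W.Δ) = 2 * p * vP q (algebraMap (𝓞 K) K (a * b * c)) := by
    rw [hΔ, map_mul, vP_algebraMap_mul_of_notMem q (fun h => hq2 (q.isPrime.mem_of_pow_mem _ h)),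
      map_pow, vP_pow]
    push_cast
    ring
  exact ⟨vP_algebraMap_eq_zero_of_notMem q hc₄, hvΔ, hvΔ ▸ dvd_mul_of_dvd_left (dvd_mul_left _ _) _⟩

/-- **Multiplicative reduction data of the Frey curve at odd primes**. If `(a,b,c)` is a
non-trivial solution of `aᵖ + bᵖ = 2^r cᵖ` over a number field `K` and `q ∤ 2` is a prime
ideal dividing exactly one of `a`, `b`, `c`, then for the Frey curve
`Y² = X(X - aᵖ)(X + bᵖ)` one has `v_q(c₄) = 0` and `v_q(Δ_E) = 2p·v_q(abc)`; in
particular `p ∣ v_q(Δ_E)`. -/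
theorem frey_curve_valuation_at_odd_primes
    (K : Type) [Field K] [NumberField K]
    (p : ℕ) (hp : p.Prime) (r : ℕ) (a b c : 𝓞 K)
    (hsol : a ^ p + b ^ p = 2 ^ r * c ^ p)
    (hnontriv : ¬ (a * b * c = 0 ∨ a = b ∨ a = -b))
    (W : WeierstrassCurve (𝓞 K))
    (hW : W = { a₁ := 0, a₂ := b ^ p - a ^ p, a₃ := 0, a₄ := -(a ^ p * b ^ p), a₆ := 0 })
    (q : HeightOneSpectrum (𝓞 K)) (hq2 : (2 : 𝓞 K) ∉ q.asIdeal)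
    (hexactlyOne :
      (a ∈ q.asIdeal ∧ b ∉ q.asIdeal ∧ c ∉ q.asIdeal) ∨
      (a ∉ q.asIdeal ∧ b ∈ q.asIdeal ∧ c ∉ q.asIdeal) ∨
      (a ∉ q.asIdeal ∧ b ∉ q.asIdeal ∧ c ∈ q.asIdeal)) :
    vP q (algebraMap (𝓞 K) K W.c₄) = 0 ∧
    vP q (algebraMap (𝓞 K) K W.Δ) = 2 * p * vP q (algebraMap (𝓞 K) K (a * b * c)) ∧
    (p : ℤ) ∣ vP q (algebraMap (𝓞 K) K W.Δ) :=
  frey_curve_valuation_at_odd_primes_general K p hp r a b c hsol W hW q hq2 hexactlyOne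
end

section
/- Let K be a number field and let S_K be the set of prime ideals of O_K dividing 2. Let λ ∈ K with λ ≠ 0 and λ ≠ 1, and suppose that j := 2^8 (λ² − λ + 1)³ / (λ²(1 − λ)²) lies in the ring of S_K-integers O_{S_K}. Then λ ∈ O_{S_K}^* and 1 − λ ∈ O_{S_K}^*, i.e. λ and μ := 1 − λ are S_K-units satisfying the S_K-unit equation λ + μ = 1. -/
/-!
Let `v` be a valuation with `v 2 = 1`. If `v λ < 1`, then `1 - λ` and
`λ² - λ + 1 = 1 - λ(1 - λ)` are `v`-units by the ultrametric inequality, so `v j = (v λ)⁻²`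
exceeds `1`. As `j` is invariant under `λ ↦ λ⁻¹` and `λ ↦ 1 - λ`, the same happens when
`v λ > 1` or `v (1 - λ) < 1`, while `v (1 - λ) > 1` is impossible once `v λ = 1`.
Apply this to the valuations at the primes not above `2`.
-/

open NumberField IsDedekindDomain

section Legendre

variable {K : Type*} [Field K]

def legendreJ (lam : K) : K :=
  2 ^ 8 * (lam ^ 2 - lam + 1) ^ 3 / (lam ^ 2 * (1 - lam) ^ 2)

theorem legendreJ_one_sub (lam : K) : legendreJ (1 - lam) = legendreJ lam := by
  unfold legendreJ
  ring

theorem legendreJ_inv (lam : K) : legendreJ lam⁻¹ = legendreJ lam := by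
  unfold legendreJ
  rcases eq_or_ne lam 0 with rfl | h0
  · simp
  rcases eq_or_ne lam 1 with rfl | h1
  · simp
  have h1' : 1 - lam ≠ 0 := sub_ne_zero.mpr h1.symm
  field_simp
  ring

variable {Γ₀ : Type*} [LinearOrderedCommGroupWithZero Γ₀] (v : Valuation K Γ₀)

theorem Valuation.one_lt_legendreJ_of_lt_one (h2 : v 2 = 1) {lam : K} (h0 : lam ≠ 0)
    (hlt : v lam < 1) : 1 < v (legendreJ lam) := by
  have h1 : v (1 - lam) = 1 := v.map_one_sub_of_lt hlt
  have hc : v (lam ^ 2 - lam + 1) = 1 := by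
    rw [show lam ^ 2 - lam + 1 = 1 - lam * (1 - lam) by ring]
    exact v.map_one_sub_of_lt (by rwa [map_mul, h1, mul_one])
  have hv0 : 0 < v lam := zero_lt_iff.mpr ((v.ne_zero_iff).mpr h0)
  rw [legendreJ, map_div₀, map_mul, map_mul, map_pow, map_pow, map_pow, map_pow, h2, h1, hc]
  simp only [one_pow, mul_one, one_div]
  exact (one_lt_inv₀ (pow_pos hv0 2)).mpr (pow_lt_one₀ zero_le hlt two_ne_zero)

theorem Valuation.eq_one_of_legendreJ_le_one (h2 : v 2 = 1) {lam : K} (h0 : lam ≠ 0)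
    (h1 : lam ≠ 1) (hj : v (legendreJ lam) ≤ 1) : v lam = 1 ∧ v (1 - lam) = 1 := by
  have hlam : v lam = 1 := by
    rcases lt_trichotomy (v lam) 1 with hlt | heq | hgt
    · exact absurd hj (v.one_lt_legendreJ_of_lt_one h2 h0 hlt).not_ge
    · exact heq
    · have := v.one_lt_legendreJ_of_lt_one h2 (inv_ne_zero h0)
        (by rw [map_inv₀]; exact inv_lt_one_of_one_lt₀ hgt)
      rw [legendreJ_inv] at this
      exact absurd hj this.not_ge
  refine ⟨hlam, le_antisymm ?_ (not_lt.mp fun hlt => ?_)⟩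
  · exact (v.map_sub 1 lam).trans (by rw [map_one, hlam, max_self])
  · have := v.one_lt_legendreJ_of_lt_one h2 (sub_ne_zero.mpr h1.symm) hlt
    rw [legendreJ_one_sub] at this
    exact hj.not_gt this

end Legendre

/-- **Legendre `λ`-invariants are `S_K`-units when the `j`-invariant is an `S_K`-integer**.
If `λ ∈ K \ {0, 1}` and `j = 2⁸(λ² - λ + 1)³/(λ²(1 - λ)²)` lies in the ring of
`S_K`-integers, then `λ` and `μ := 1 - λ` are `S_K`-units satisfying `λ + μ = 1`. -/
theorem legendre_lambda_is_S_unit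
    (K : Type) [Field K] [NumberField K]
    (SK : Set (HeightOneSpectrum (𝓞 K)))
    (hSK : SK = {P : HeightOneSpectrum (𝓞 K) | (2 : 𝓞 K) ∈ P.asIdeal})
    (lam : K) (hlam0 : lam ≠ 0) (hlam1 : lam ≠ 1)
    (j : K) (hj : j = 2 ^ 8 * (lam ^ 2 - lam + 1) ^ 3 / (lam ^ 2 * (1 - lam) ^ 2))
    (hjint : j ∈ SK.integer K) :
    (∃ u : Kˣ, (u : K) = lam ∧ u ∈ SK.unit K) ∧
    (∃ u : Kˣ, (u : K) = 1 - lam ∧ u ∈ SK.unit K) := by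
  have hunits : ∀ P ∉ SK, P.valuation K lam = 1 ∧ P.valuation K (1 - lam) = 1 := by
    intro P hP
    have h2 : P.valuation K 2 = 1 := by
      subst hSK
      rw [← map_ofNat (algebraMap (𝓞 K) K) 2]
      exact P.valuation_eq_one_iff_notMem.mpr hP
    subst hj
    exact (P.valuation K).eq_one_of_legendreJ_le_one h2 hlam0 hlam1
      (SK.integer_valuation_le_one K ⟨_, hjint⟩ hP)
  exact ⟨⟨Units.mk0 lam hlam0, rfl, fun P hP => (hunits P hP).1⟩,
    ⟨Units.mk0 (1 - lam) (sub_ne_zero.mpr hlam1.symm), rfl, fun P hP => (hunits P hP).2⟩⟩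
end

section
/- Let K be a number field, P a prime ideal of O_K with P-adic valuation v_P, and let λ, μ ∈ K* satisfy λ + μ = 1. Set t := max(|v_P(λ)|, |v_P(μ)|). If t > 0, then v_P(λμ) = −2t or v_P(λμ) = t; in particular v_P(λμ) ≡ t (mod 3). -/
/-!
By the ultrametric inequality, `λ + μ = 1` leaves three possibilities: `v_P(λ) = v_P(μ) ≤ 0`,
or one of `v_P(λ), v_P(μ)` vanishes and the other is positive. Since
`v_P(λμ) = v_P(λ) + v_P(μ)`, this equals `-2t` in the first case and `t` in the others.
-/

open NumberField IsDedekindDomain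

theorem Valuation.cases_of_add_eq_one {R Γ₀ : Type*} [Ring R]
    [LinearOrderedCommMonoidWithZero Γ₀] (v : Valuation R Γ₀) {x y : R} (h : x + y = 1) :
    (v x = v y ∧ 1 ≤ v x) ∨ (v x = 1 ∧ v y < 1) ∨ (v y = 1 ∧ v x < 1) := by
  rcases lt_trichotomy (v x) (v y) with hxy | hxy | hxy
  · have hy : v y = 1 := by rw [← v.map_add_eq_of_lt_right hxy, h, v.map_one]
    exact Or.inr (Or.inr ⟨hy, hy ▸ hxy⟩)
  · refine Or.inl ⟨hxy, ?_⟩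
    simpa only [h, v.map_one, ← hxy, max_self] using v.map_add x y
  · have hx : v x = 1 := by rw [← v.map_add_eq_of_lt_left hxy, h, v.map_one]
    exact Or.inr (Or.inl ⟨hx, hx ▸ hxy⟩)

theorem Int.add_eq_neg_two_mul_or_eq_max_abs {a b : ℤ}
    (h : (a = b ∧ a ≤ 0) ∨ (a = 0 ∧ 0 < b) ∨ (b = 0 ∧ 0 < a)) :
    a + b = -2 * max |a| |b| ∨ a + b = max |a| |b| := by
  rcases h with ⟨rfl, ha⟩ | ⟨rfl, hb⟩ | ⟨rfl, ha⟩
  · left; rw [max_self, abs_of_nonpos ha]; ring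
  · right; rw [abs_zero, abs_of_pos hb, max_eq_right hb.le, zero_add]
  · right; rw [abs_zero, abs_of_pos ha, max_eq_left ha.le, add_zero]

section vP

variable {K : Type} [Field K] [NumberField K] (P : HeightOneSpectrum (𝓞 K))

theorem vP_eq_neg_log {x : K} (hx : x ≠ 0) : vP P x = -WithZero.log (P.valuation K x) := by
  rw [vP, dif_neg hx, WithZero.toAdd_unzero_eq_log]

theorem vP_one : vP P (1 : K) = 0 := by
  rw [vP_eq_neg_log P one_ne_zero, map_one, WithZero.log_one, neg_zero]

theorem vP_mul {x y : K} (hx : x ≠ 0) (hy : y ≠ 0) : vP P (x * y) = vP P x + vP P y := by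
  rw [vP_eq_neg_log P (mul_ne_zero hx hy), vP_eq_neg_log P hx, vP_eq_neg_log P hy, map_mul,
    WithZero.log_mul ((P.valuation K).ne_zero_iff.mpr hx) ((P.valuation K).ne_zero_iff.mpr hy),
    neg_add]

theorem vP_le_vP_iff {x y : K} (hx : x ≠ 0) (hy : y ≠ 0) :
    vP P x ≤ vP P y ↔ P.valuation K y ≤ P.valuation K x := by
  rw [vP_eq_neg_log P hx, vP_eq_neg_log P hy, neg_le_neg_iff,
    WithZero.log_le_log ((P.valuation K).ne_zero_iff.mpr hy) ((P.valuation K).ne_zero_iff.mpr hx)]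

theorem vP_eq_vP_iff {x y : K} (hx : x ≠ 0) (hy : y ≠ 0) :
    vP P x = vP P y ↔ P.valuation K x = P.valuation K y := by
  rw [le_antisymm_iff, le_antisymm_iff, vP_le_vP_iff P hx hy, vP_le_vP_iff P hy hx, and_comm]

theorem vP_cases_of_add_eq_one {x y : K} (hx : x ≠ 0) (hy : y ≠ 0) (h : x + y = 1) :
    (vP P x = vP P y ∧ vP P x ≤ 0) ∨ (vP P x = 0 ∧ 0 < vP P y) ∨ (vP P y = 0 ∧ 0 < vP P x) := by
  have h1 : (1 : K) ≠ 0 := one_ne_zero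
  simpa only [← vP_one P, vP_eq_vP_iff P hx hy, vP_eq_vP_iff P hx h1, vP_eq_vP_iff P hy h1,
    vP_le_vP_iff P hx h1, ← not_le, vP_le_vP_iff P hy h1, vP_le_vP_iff P h1 hx,
    vP_le_vP_iff P h1 hy, map_one]
    using (P.valuation K).cases_of_add_eq_one h

end vP

theorem valuation_mul_of_unit_equation_general
    (K : Type) [Field K] [NumberField K]
    (P : HeightOneSpectrum (𝓞 K))
    (lam mu : K) (hlam : lam ≠ 0) (hmu : mu ≠ 0) (hsum : lam + mu = 1)
    (t : ℤ) (ht : t = max |vP P lam| |vP P mu|) :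
    (vP P (lam * mu) = -2 * t ∨ vP P (lam * mu) = t) ∧
    vP P (lam * mu) ≡ t [ZMOD 3] := by
  have hcases : vP P (lam * mu) = -2 * t ∨ vP P (lam * mu) = t := by
    rw [vP_mul P hlam hmu, ht]
    exact Int.add_eq_neg_two_mul_or_eq_max_abs (vP_cases_of_add_eq_one P hlam hmu hsum)
  refine ⟨hcases, Int.modEq_iff_dvd.mpr ?_⟩
  rcases hcases with h | h <;> omega

/-- **Valuation of `λμ` for a solution of the unit equation**. If `λ, μ ∈ K*` satisfy
`λ + μ = 1` and `t := max(|v_P λ|, |v_P μ|) > 0`, then `v_P(λμ) = -2t` or `v_P(λμ) = t`;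
in particular `v_P(λμ) ≡ t (mod 3)`. -/
theorem valuation_mul_of_unit_equation
    (K : Type) [Field K] [NumberField K]
    (P : HeightOneSpectrum (𝓞 K))
    (lam mu : K) (hlam : lam ≠ 0) (hmu : mu ≠ 0) (hsum : lam + mu = 1)
    (t : ℤ) (ht : t = max |vP P lam| |vP P mu|) (htpos : 0 < t) :
    (vP P (lam * mu) = -2 * t ∨ vP P (lam * mu) = t) ∧
    vP P (lam * mu) ≡ t [ZMOD 3] :=
  valuation_mul_of_unit_equation_general K P lam mu hlam hmu hsum t ht
end
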